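/- If S(p) = Σₖ pᵏ Sₖ is a quaternionic power series such that the Toeplitz contractivity condition holds (Iₙ - Sₙ Sₙ* ≥ 0 for all n, where Sₙ is the lower triangular Toeplitz matrix of the coefficients), then |S₀| ≤ 1 and |Sₖ| ≤ 1 for every k; moreover the series converges on the unit ball and |S(p)| ≤ 1 for all |p| < 1. -/

import Mathlib

/-!
Positivity of `I - Sₙ Sₙ*` says exactly that `v ↦ v* Sₙ` is a contraction. On the last unit
vector this bounds the last row `(Sₙ, …, S₀)`, so `|Sₙ| ≤ 1`. On `v = (p̄ⁱ)ᵢ` the `l`-th entry of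
`v* Sₙ` is `pˡ sₙ₋ₗ(p)`, where `sⱼ(p) = Σ_{m ≤ j} pᵐ Sₘ`, so
`Σ_{l ≤ n} |p|^{2l} |sₙ₋ₗ(p)|² ≤ Σ_{l ≤ n} |p|^{2l}`. Letting `n → ∞` with only the first `L`
terms kept on the left, and then `L → ∞`, gives `|S(p)|² / (1 - |p|²) ≤ 1 / (1 - |p|²)`.
-/

open Quaternion Matrix Filter Finset Topology

namespace Quaternion

lemma coe_sum {ι : Type*} (s : Finset ι) (f : ι → ℝ) :
    ((∑ i ∈ s, f i : ℝ) : ℍ[ℝ]) = ∑ i ∈ s, (f i : ℍ[ℝ]) := by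
  simpa only [algebraMap_def] using map_sum (algebraMap ℝ ℍ[ℝ]) f s

lemma star_dotProduct_self {ι : Type*} [Fintype ι] (w : ι → ℍ[ℝ]) :
    star w ⬝ᵥ w = ((∑ i, ‖w i‖ ^ 2 : ℝ) : ℍ[ℝ]) := by
  simp only [dotProduct, Pi.star_apply, star_mul_self, normSq_eq_norm_mul_self, coe_sum, sq]

lemma dotProduct_star_self {ι : Type*} [Fintype ι] (w : ι → ℍ[ℝ]) :
    w ⬝ᵥ star w = ((∑ i, ‖w i‖ ^ 2 : ℝ) : ℍ[ℝ]) := by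
  simp only [dotProduct, Pi.star_apply, self_mul_star, normSq_eq_norm_mul_self, coe_sum, sq]

lemma sum_star_mul_one_sub_mul_conjTranspose_mul {m k : Type*} [Fintype m] [DecidableEq m]
    [Fintype k] (T : Matrix m k ℍ[ℝ]) (v : m → ℍ[ℝ]) :
    ∑ i, ∑ j, star (v i) * ((1 - T * Tᴴ : Matrix m m ℍ[ℝ]) i j) * v j
      = ((∑ i, ‖v i‖ ^ 2 - ∑ l, ‖(star v ᵥ* T) l‖ ^ 2 : ℝ) : ℍ[ℝ]) := by
  have hform : ∑ i, ∑ j, star (v i) * ((1 - T * Tᴴ : Matrix m m ℍ[ℝ]) i j) * v j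
      = star v ⬝ᵥ ((1 - T * Tᴴ) *ᵥ v) := by
    simp only [dotProduct, mulVec, Pi.star_apply, mul_sum, mul_assoc]
  have hadjoint : Tᴴ *ᵥ v = star (star v ᵥ* T) := by rw [star_vecMul, star_star]
  rw [hform, sub_mulVec, one_mulVec, ← mulVec_mulVec, dotProduct_sub, dotProduct_mulVec, hadjoint,
    star_dotProduct_self, dotProduct_star_self, coe_sub]

end Quaternion

def lowerToeplitz {R : Type*} [Zero R] (S : ℕ → R) (n : ℕ) :
    Matrix (Fin (n + 1)) (Fin (n + 1)) R :=
  of fun i j => if (j : ℕ) ≤ i then S (i - j) else 0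

lemma vecMul_lowerToeplitz_apply {R : Type*} [Semiring R] (S : ℕ → R) {n : ℕ} (c : ℕ → R)
    (l : Fin (n + 1)) :
    ((fun i : Fin (n + 1) => c i) ᵥ* lowerToeplitz S n) l
      = ∑ m ∈ range (n - l + 1), c (l + m) * S m := by
  set f : ℕ → R := fun i => c i * if (l : ℕ) ≤ i then S (i - l) else 0
  have hsplit := sum_range_add f l (n - l + 1)
  rw [show (l : ℕ) + (n - l + 1) = n + 1 by omega,
    sum_eq_zero (s := range l) fun i hi => by simp [f, (mem_range.1 hi).not_ge],
    zero_add] at hsplit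
  simp only [vecMul, dotProduct, lowerToeplitz, of_apply]
  rw [Fin.sum_univ_eq_sum_range f, hsplit]
  simp [f]

def IsVecMulContraction {m k : Type*} [Fintype m] [Fintype k] (T : Matrix m k ℍ[ℝ]) : Prop :=
  ∀ v : m → ℍ[ℝ], ∑ l, ‖(star v ᵥ* T) l‖ ^ 2 ≤ ∑ i, ‖v i‖ ^ 2

lemma isVecMulContraction_of_form_nonneg {m k : Type*} [Fintype m] [DecidableEq m] [Fintype k]
    {T : Matrix m k ℍ[ℝ]}
    (h : ∀ v : m → ℍ[ℝ], ∃ t : ℝ, 0 ≤ t ∧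
      ∑ i, ∑ j, star (v i) * ((1 - T * Tᴴ : Matrix m m ℍ[ℝ]) i j) * v j = t) :
    IsVecMulContraction T := by
  intro v
  obtain ⟨t, ht, hform⟩ := h v
  rw [sum_star_mul_one_sub_mul_conjTranspose_mul, Quaternion.coe_inj] at hform
  linarith

lemma norm_le_one_of_isVecMulContraction_lowerToeplitz (S : ℕ → ℍ[ℝ]) {n : ℕ}
    (hS : IsVecMulContraction (lowerToeplitz S n)) :
    ‖S n‖ ≤ 1 := by
  set c : ℕ → ℍ[ℝ] := fun k => if k = n then 1 else 0
  have h := hS fun i : Fin (n + 1) => c i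
  have hstar : star (fun i : Fin (n + 1) => c i) = fun i : Fin (n + 1) => c i := by
    ext1 i; simp only [c, Pi.star_apply]; split_ifs <;> simp
  have hrow (l : Fin (n + 1)) : ∑ m ∈ range (n - l + 1), c (l + m) * S m = S (n - l) := by
    rw [sum_eq_single (n - l) (fun m _ hm => by simp [c]; omega) (by simp)]
    simp [c, Nat.add_sub_cancel' (Fin.is_le l)]
  have hnorm : ∑ i : Fin (n + 1), ‖c i‖ ^ 2 = 1 := by
    rw [Fintype.sum_eq_single (Fin.last n) fun i hi => by simpa [c, Fin.ext_iff] using hi]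
    simp [c]
  rw [hstar] at h
  simp only [vecMul_lowerToeplitz_apply, hrow, hnorm] at h
  have hfirst := single_le_sum (f := fun l : Fin (n + 1) => ‖S (n - l)‖ ^ 2)
    (fun l _ => by positivity) (mem_univ 0)
  simp only [Fin.val_zero, Nat.sub_zero] at hfirst
  exact (pow_le_one_iff_of_nonneg (norm_nonneg _) two_ne_zero).1 (hfirst.trans h)

lemma sum_geometric_mul_norm_partialSum_sq_le (S : ℕ → ℍ[ℝ]) {n : ℕ} (p : ℍ[ℝ])
    (hS : IsVecMulContraction (lowerToeplitz S n)) :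
    ∑ l ∈ range (n + 1), (‖p‖ ^ 2) ^ l * ‖∑ m ∈ range (n - l + 1), p ^ m * S m‖ ^ 2
      ≤ ∑ l ∈ range (n + 1), (‖p‖ ^ 2) ^ l := by
  have h := hS fun i : Fin (n + 1) => star p ^ (i : ℕ)
  have hstar :
      star (fun i : Fin (n + 1) => star p ^ (i : ℕ)) = fun i : Fin (n + 1) => p ^ (i : ℕ) := by
    ext1 i; simp [star_pow]
  have hrow (l : ℕ) : ∑ m ∈ range (n - l + 1), p ^ (l + m) * S m
      = p ^ l * ∑ m ∈ range (n - l + 1), p ^ m * S m := by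
    simp only [mul_sum, pow_add, mul_assoc]
  rw [hstar] at h
  simp only [vecMul_lowerToeplitz_apply, hrow, norm_mul, norm_pow, norm_star, mul_pow,
    ← pow_mul, mul_comm _ 2] at h
  rw [Fin.sum_univ_eq_sum_range
      (fun l => ‖p‖ ^ (2 * l) * ‖∑ m ∈ range (n - l + 1), p ^ m * S m‖ ^ 2),
    Fin.sum_univ_eq_sum_range (fun l => ‖p‖ ^ (2 * l))] at h
  simpa only [pow_mul] using h

lemma le_one_of_sum_geometric_mul_le {r A : ℝ} {a : ℕ → ℝ} (hr₀ : 0 ≤ r) (hr₁ : r < 1)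
    (ha₀ : ∀ j, 0 ≤ a j) (ha : Tendsto a atTop (𝓝 A))
    (h : ∀ n, ∑ l ∈ range (n + 1), r ^ l * a (n - l) ≤ ∑ l ∈ range (n + 1), r ^ l) :
    A ≤ 1 := by
  have hgeo := hasSum_geometric_of_lt_one hr₀ hr₁
  have htrunc (L : ℕ) : (∑ l ∈ range (L + 1), r ^ l) * A ≤ (1 - r)⁻¹ := by
    have hlim : Tendsto (fun n => ∑ l ∈ range (L + 1), r ^ l * a (n - l)) atTop
        (𝓝 ((∑ l ∈ range (L + 1), r ^ l) * A)) := by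
      rw [sum_mul]
      exact tendsto_finsetSum _ fun l _ =>
        (ha.comp (tendsto_sub_atTop_nat l)).const_mul _
    refine le_of_tendsto hlim (eventually_atTop.2 ⟨L, fun n hn => ?_⟩)
    calc ∑ l ∈ range (L + 1), r ^ l * a (n - l)
        ≤ ∑ l ∈ range (n + 1), r ^ l * a (n - l) :=
          sum_le_sum_of_subset_of_nonneg (range_subset_range.2 (by omega))
            fun l _ _ => mul_nonneg (pow_nonneg hr₀ l) (ha₀ _)
      _ ≤ ∑ l ∈ range (n + 1), r ^ l := h n
      _ ≤ ∑' l, r ^ l := hgeo.summable.sum_le_tsum _ fun l _ => pow_nonneg hr₀ l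
      _ = (1 - r)⁻¹ := hgeo.tsum_eq
  have hlim : Tendsto (fun L => (∑ l ∈ range (L + 1), r ^ l) * A) atTop (𝓝 ((1 - r)⁻¹ * A)) :=
    (hgeo.tendsto_sum_nat.comp (tendsto_add_atTop_nat 1)).mul_const A
  have hA : (1 - r)⁻¹ * A ≤ (1 - r)⁻¹ * 1 := by
    simpa only [mul_one] using le_of_tendsto' hlim htrunc
  exact le_of_mul_le_mul_left hA (inv_pos.2 (sub_pos.2 hr₁))

theorem toeplitz_contractive_implies_bounded (S : ℕ → ℍ[ℝ])
    (hT : ∀ n : ℕ, ∀ v : Fin (n + 1) → ℍ[ℝ], ∃ t : ℝ, 0 ≤ t ∧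
      ∑ i, ∑ j, star (v i) *
        (((1 : Matrix (Fin (n + 1)) (Fin (n + 1)) ℍ[ℝ])
          - (Matrix.of fun i j : Fin (n + 1) =>
              if (j : ℕ) ≤ (i : ℕ) then S ((i : ℕ) - (j : ℕ)) else 0)
            * (Matrix.of fun i j : Fin (n + 1) =>
              if (j : ℕ) ≤ (i : ℕ) then S ((i : ℕ) - (j : ℕ)) else 0)ᴴ) i j)
        * v j = (t : ℍ[ℝ])) :
    (∀ k : ℕ, ‖S k‖ ≤ 1) ∧
      ∀ p : ℍ[ℝ], ‖p‖ < 1 →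
        (Summable fun k : ℕ => ‖p ^ k * S k‖) ∧ ‖∑' k : ℕ, p ^ k * S k‖ ≤ 1 := by
  have hcontr (n : ℕ) : IsVecMulContraction (lowerToeplitz S n) :=
    isVecMulContraction_of_form_nonneg (hT n)
  have hS (k : ℕ) : ‖S k‖ ≤ 1 := norm_le_one_of_isVecMulContraction_lowerToeplitz S (hcontr k)
  refine ⟨hS, fun p hp => ?_⟩
  have hsum : Summable fun k => ‖p ^ k * S k‖ := by
    refine (summable_geometric_of_lt_one (norm_nonneg p) hp).of_nonneg_of_le
      (fun _ => norm_nonneg _) fun k => ?_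
    rw [norm_mul, norm_pow]
    exact mul_le_of_le_one_right (pow_nonneg (norm_nonneg p) k) (hS k)
  refine ⟨hsum, ?_⟩
  have hpartial : Tendsto (fun j => ‖∑ m ∈ range (j + 1), p ^ m * S m‖ ^ 2) atTop
      (𝓝 (‖∑' k, p ^ k * S k‖ ^ 2)) :=
    ((hsum.of_norm.hasSum.tendsto_sum_nat.comp (tendsto_add_atTop_nat 1)).norm).pow 2
  have hsq := le_one_of_sum_geometric_mul_le (by positivity)
    (pow_lt_one₀ (norm_nonneg p) hp two_ne_zero) (fun _ => by positivity) hpartial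
    fun n => sum_geometric_mul_norm_partialSum_sq_le S p (hcontr n)
  exact (pow_le_one_iff_of_nonneg (norm_nonneg _) two_ne_zero).1 hsq
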